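/- Let σ, ζ, ℘ be the Weierstrass sigma, zeta and elliptic functions of a lattice 𝓛 ⊂ ℂ. For every k ∈ ℂ not in 𝓛, the function ψ(z,k) = (σ(z+k)/(σ(z)σ(k))) · exp(−ζ(k)z) is a solution of the m = 1 Lamé equation −ψ'' + 2℘(z)ψ = λψ with λ = −℘(k), on any domain avoiding the lattice points; moreover, for every half-period ω (i.e., 2ω ∈ 𝓛) it has the Floquet property ψ(z+2ω, k) = exp(2ηk − 2ζ(k)ω) ψ(z,k), where η = ζ(ω). -/

import Mathlib

open Complex Set Filter

noncomputable section

/-- The period lattice with half-periods `w1`, `w3`, i.e. the set of all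
`2 m w1 + 2 n w3` with `m n : ℤ`. -/
def latticeSet (w1 w3 : ℂ) : Set ℂ := {z | ∃ m n : ℤ, z = 2 * m * w1 + 2 * n * w3}

/-- Weierstrass data for a lattice `𝓛` with basic half-periods `w1`, `w3`:
the functions `℘` (denoted `P`), `ζ` (denoted `Z`) and `σ` (denoted `S`),
characterized up to uniqueness by their standard analytic properties:
`℘` is `𝓛`-periodic, holomorphic off `𝓛`, with `℘(z) - 1/z² → 0` as `z → 0`;
`ζ` is odd with `ζ' = -℘`; `σ` is entire, non-vanishing off `𝓛`, with
`σ'/σ = ζ` and `σ(z)/z → 1` as `z → 0`. -/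
structure WeierstrassData where
  w1 : ℂ
  w3 : ℂ
  P : ℂ → ℂ
  Z : ℂ → ℂ
  S : ℂ → ℂ
  w1_ne : w1 ≠ 0
  indep : ∀ r : ℝ, w3 ≠ (r : ℂ) * w1
  P_diff : ∀ z ∉ latticeSet w1 w3, DifferentiableAt ℂ P z
  P_periodic : ∀ w ∈ latticeSet w1 w3, ∀ z, P (z + w) = P z
  P_pole : Tendsto (fun z => P z - 1 / z ^ 2) (nhdsWithin 0 {(0 : ℂ)}ᶜ) (nhds 0)
  Z_diff : ∀ z ∉ latticeSet w1 w3, DifferentiableAt ℂ Z z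
  Z_deriv : ∀ z ∉ latticeSet w1 w3, deriv Z z = -P z
  Z_odd : ∀ z, Z (-z) = -Z z
  S_diff : Differentiable ℂ S
  S_ne : ∀ z ∉ latticeSet w1 w3, S z ≠ 0
  S_deriv : ∀ z ∉ latticeSet w1 w3, deriv S z = Z z * S z
  S_norm : Tendsto (fun z => S z / z) (nhdsWithin 0 {(0 : ℂ)}ᶜ) (nhds 1)

namespace WeierstrassData

variable (W : WeierstrassData)

/-- The period lattice of `W`. -/
def lattice : Set ℂ := latticeSet W.w1 W.w3

/-- The third basic half-period `ω₂ = ω₁ + ω₃`. -/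
def w2 : ℂ := W.w1 + W.w3

/-- `e₁ = ℘(ω₁)`. -/
def e1 : ℂ := W.P W.w1
/-- `e₂ = ℘(ω₂)`. -/
def e2 : ℂ := W.P W.w2
/-- `e₃ = ℘(ω₃)`. -/
def e3 : ℂ := W.P W.w3

/-- The Rofe-Beketov spectrum of the complex Lamé operator
`L = -d²/dx² + m(m+1) ω² ℘(ωx + z₀)` in `L²(ℝ)`: the set of `λ ∈ ℂ` for which
the equation `Lψ = λψ` has a nonzero bounded solution on the whole real line. -/
def lameSpectrum (m : ℕ) (ω z0 : ℂ) : Set ℂ :=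
  {lam | ∃ φ : ℝ → ℂ, φ ≠ 0 ∧ ContDiff ℝ 2 φ ∧
    (∀ x : ℝ, -deriv (deriv φ) x + (m * (m + 1) : ℂ) * ω ^ 2 * W.P (ω * x + z0) * φ x
      = lam * φ x) ∧ ∃ C : ℝ, ∀ x : ℝ, ‖φ x‖ ≤ C}

/-- The function `u(k) = Re[η k - ω ζ(k)]`, where `η = ζ(ω)`. -/
def uFun (ω : ℂ) : ℂ → ℝ := fun k => (W.Z ω * k - ω * W.Z k).re

/-- The function `v(k) = Im[η k - ω ζ(k)]`, where `η = ζ(ω)`. -/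
def vFun (ω : ℂ) : ℂ → ℝ := fun k => (W.Z ω * k - ω * W.Z k).im

end WeierstrassData




/-- Hermite's solution `ψ(z,k) = σ(z+k)/(σ(z)σ(k)) · exp(-ζ(k)z)` of the
`m = 1` Lamé equation. -/
def hermitePsi (W : WeierstrassData) (k : ℂ) : ℂ → ℂ :=
  fun z => W.S (z + k) / (W.S z * W.S k) * Complex.exp (-W.Z k * z)


/-!
`ψ(·, k)` has logarithmic derivative `Q(z) = ζ(z + k) - ζ(z) - ζ(k)`, so `ψ'' = (Q' + Q²) ψ` with
`Q' = ℘(z) - ℘(z + k)`, and the Lamé equation is the addition theorem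
`Q² = ℘(z) + ℘(z + k) + ℘(k)`. The difference of its two sides is elliptic. Writing
`σ(z) = z u(z)` with `u(0) = 1` gives `ζ(z) = 1/z + u'/u` near `0`, which shows that the
difference tends to `0` at `0`; by periodicity and the symmetry `z ↦ -z - k` the same holds
at all its singularities, so by Liouville it vanishes.

For the Floquet property, `ζ(z + 2ω) - ζ(z)` is constant, equal to `2ζ(ω)` by oddness of `ζ`,
which integrates to `σ(z + 2ω) = C e^{2ζ(ω)z} σ(z)`.
-/

open scoped Topology

namespace WeierstrassData

variable (W : WeierstrassData)

theorem linearIndependent_periods : LinearIndependent ℝ ![2 * W.w1, 2 * W.w3] := by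
  refine (LinearIndependent.pair_iff' (mul_ne_zero two_ne_zero W.w1_ne)).2 fun r h => ?_
  refine W.indep r ?_
  rw [Complex.real_smul] at h
  linear_combination -h / 2

def periodPair : PeriodPair := ⟨2 * W.w1, 2 * W.w3, W.linearIndependent_periods⟩

theorem mem_lattice_iff {z : ℂ} : z ∈ W.lattice ↔ z ∈ W.periodPair.lattice := by
  simp only [lattice, latticeSet, Set.mem_ofPred_eq, PeriodPair.mem_lattice, periodPair]
  exact exists₂_congr fun m n => by rw [eq_comm]; ring_nf

theorem coe_periodPair_lattice : (W.periodPair.lattice : Set ℂ) = W.lattice :=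
  Set.ext fun _ => W.mem_lattice_iff.symm

variable {W}

theorem add_mem_lattice_iff {z w : ℂ} (hw : w ∈ W.lattice) :
    z + w ∈ W.lattice ↔ z ∈ W.lattice := by
  rw [mem_lattice_iff] at hw ⊢
  rw [add_mem_cancel_right hw, mem_lattice_iff]

theorem neg_mem_lattice_iff {z : ℂ} : -z ∈ W.lattice ↔ z ∈ W.lattice := by
  rw [mem_lattice_iff, mem_lattice_iff, neg_mem_iff]

variable (W)

theorem countable_lattice : W.lattice.Countable := by
  rw [← coe_periodPair_lattice, ← Set.countable_coe_iff]
  exact instCountable_of_discrete_submodule _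

theorem isOpen_compl_lattice : IsOpen W.latticeᶜ := by
  rw [← coe_periodPair_lattice]
  exact W.periodPair.isClosed_lattice.isOpen_compl

theorem isPreconnected_compl_lattice : IsPreconnected W.latticeᶜ :=
  (W.countable_lattice.isPathConnected_compl_of_one_lt_rank
    (by simp [Complex.rank_real_complex])).isConnected.isPreconnected

theorem dense_compl_lattice : Dense W.latticeᶜ := W.countable_lattice.dense_compl ℂ

theorem eventually_mem_lattice_imp_eq (p : ℂ) : ∀ᶠ z in 𝓝 p, z ∈ W.lattice → z = p := by
  filter_upwards [W.periodPair.compl_lattice_sdiff_singleton_mem_nhds p] with z hz hzL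
  by_contra hzp
  exact hz ⟨W.mem_lattice_iff.1 hzL, hzp⟩

theorem zero_mem_lattice : (0 : ℂ) ∈ W.lattice := W.mem_lattice_iff.2 (zero_mem _)

theorem eventually_nhdsNE_notMem_lattice (p : ℂ) : ∀ᶠ z in 𝓝[≠] p, z ∉ W.lattice := by
  filter_upwards [nhdsWithin_le_nhds (W.eventually_mem_lattice_imp_eq p), self_mem_nhdsWithin]
    with z hz hzp hzL using hzp (hz hzL)

theorem hasDerivAt_Z {z : ℂ} (hz : z ∉ W.lattice) : HasDerivAt W.Z (-W.P z) z :=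
  W.Z_deriv z hz ▸ (W.Z_diff z hz).hasDerivAt

theorem hasDerivAt_S {z : ℂ} (hz : z ∉ W.lattice) : HasDerivAt W.S (W.Z z * W.S z) z :=
  W.S_deriv z hz ▸ (W.S_diff z).hasDerivAt

theorem P_neg {z : ℂ} (hz : z ∉ W.lattice) : W.P (-z) = W.P z := by
  have hneg : HasDerivAt (fun z => W.Z (-z)) (W.P (-z)) z := by
    simpa [Function.comp_def] using
      (W.hasDerivAt_Z (neg_mem_lattice_iff.not.2 hz)).comp z (hasDerivAt_neg z)
  have hodd : (fun z => W.Z (-z)) = fun z => -W.Z z := funext W.Z_odd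
  rw [hodd] at hneg
  simpa using hneg.unique (W.hasDerivAt_Z hz).neg

theorem Z_add_sub_Z_eq {w : ℂ} (hw : w ∈ W.lattice) {x y : ℂ} (hx : x ∉ W.lattice)
    (hy : y ∉ W.lattice) : W.Z (x + w) - W.Z x = W.Z (y + w) - W.Z y := by
  have hderiv : ∀ z ∉ W.lattice, HasDerivAt (fun z => W.Z (z + w) - W.Z z) 0 z := by
    intro z hz
    have h := ((W.hasDerivAt_Z ((add_mem_lattice_iff hw).not.2 hz)).comp_add_const z w).sub
      (W.hasDerivAt_Z hz)
    rwa [W.P_periodic w hw z, neg_sub_neg, sub_self] at h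
  exact W.isOpen_compl_lattice.is_const_of_deriv_eq_zero W.isPreconnected_compl_lattice
    (fun z hz => (hderiv z hz).differentiableAt.differentiableWithinAt)
    (fun z hz => (hderiv z hz).deriv) hx hy

/-- The quasi-period `ζ(z + 2ω) - ζ(z)` is read off at `z = -ω`, using that `ζ` is odd. -/
theorem Z_add_two_mul {ω : ℂ} (hω2 : 2 * ω ∈ W.lattice) (hω : ω ∉ W.lattice) {z : ℂ}
    (hz : z ∉ W.lattice) : W.Z (z + 2 * ω) = W.Z z + 2 * W.Z ω := by
  have h := W.Z_add_sub_Z_eq hω2 hz (neg_mem_lattice_iff.not.2 hω)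
  rw [show -ω + 2 * ω = ω by ring, W.Z_odd] at h
  linear_combination h

theorem S_add_eq_mul_exp_mul {w η : ℂ} (hw : w ∈ W.lattice)
    (hη : ∀ z ∉ W.lattice, W.Z (z + w) = W.Z z + η) :
    ∃ C ≠ 0, ∀ z, W.S (z + w) = C * Complex.exp (η * z) * W.S z := by
  set g : ℂ → ℂ := fun z => W.S (z + w) * Complex.exp (-(η * z)) / W.S z
  have hderiv : ∀ z ∉ W.lattice, HasDerivAt g 0 z := by
    intro z hz
    have hexp : HasDerivAt (fun z => Complex.exp (-(η * z))) (Complex.exp (-(η * z)) * -η) z := by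
      simpa using ((hasDerivAt_id z).const_mul η).fun_neg.cexp
    have h := (((W.hasDerivAt_S ((add_mem_lattice_iff hw).not.2 hz)).comp_add_const z w).fun_mul
      hexp).fun_div (W.hasDerivAt_S hz) (W.S_ne z hz)
    refine h.congr_deriv ?_
    rw [hη z hz]
    ring
  obtain ⟨C, hC⟩ := W.isOpen_compl_lattice.exists_is_const_of_deriv_eq_zero
    W.isPreconnected_compl_lattice
    (fun z hz => (hderiv z hz).differentiableAt.differentiableWithinAt)
    (fun z hz => (hderiv z hz).deriv)
  obtain ⟨z₀, hz₀⟩ := W.dense_compl_lattice.nonempty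
  have hg₀ : g z₀ ≠ 0 := div_ne_zero (mul_ne_zero (W.S_ne _ ((add_mem_lattice_iff hw).not.2 hz₀))
    (Complex.exp_ne_zero _)) (W.S_ne z₀ hz₀)
  have hcont : Continuous fun z => C * Complex.exp (η * z) * W.S z := by
    have := W.S_diff.continuous
    fun_prop
  refine ⟨C, hC z₀ hz₀ ▸ hg₀, congrFun (Continuous.ext_on W.dense_compl_lattice
    (W.S_diff.continuous.comp (continuous_add_const w)) hcont fun z hz => ?_)⟩
  have hexp : Complex.exp (-(η * z)) * Complex.exp (η * z) = 1 := by
    rw [← Complex.exp_add, neg_add_cancel, Complex.exp_zero]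
  rw [← hC z hz, mul_right_comm, div_mul_cancel₀ _ (W.S_ne z hz), mul_assoc, hexp, mul_one]

theorem S_zero : W.S 0 = 0 := by
  have hlim : Tendsto (fun z => W.S z / z * z) (𝓝[≠] 0) (𝓝 (1 * 0)) :=
    W.S_norm.mul (tendsto_nhdsWithin_of_tendsto_nhds tendsto_id)
  refine tendsto_nhds_unique (continuousAt_iff_punctured_nhds.1 (W.S_diff 0).continuousAt) ?_
  rw [one_mul] at hlim
  exact hlim.congr' (eventually_nhdsWithin_of_forall fun z hz => div_mul_cancel₀ _ hz)

theorem hasDerivAt_S_zero : HasDerivAt W.S 1 0 := by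
  rw [hasDerivAt_iff_tendsto_slope]
  refine W.S_norm.congr' (eventually_nhdsWithin_of_forall fun z _ => ?_)
  simp [slope_def_field, W.S_zero]

/-- `σ(z)/z`, continued holomorphically across `0`. -/
def sigmaQuot : ℂ → ℂ := dslope W.S 0

theorem differentiable_sigmaQuot : Differentiable ℂ W.sigmaQuot := by
  rw [← differentiableOn_univ]
  exact (Complex.differentiableOn_dslope Filter.univ_mem).2 W.S_diff.differentiableOn

theorem sigmaQuot_zero : W.sigmaQuot 0 = 1 := by
  rw [sigmaQuot, dslope_same, W.hasDerivAt_S_zero.deriv]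

theorem S_eq_mul_sigmaQuot (z : ℂ) : W.S z = z * W.sigmaQuot z := by
  simpa [sigmaQuot, W.S_zero, smul_eq_mul] using (sub_smul_dslope W.S 0 z).symm

/-- `ζ(z) - 1/z`, continued holomorphically across `0` as the logarithmic derivative of
`σ(z)/z`. -/
def zetaReg (z : ℂ) : ℂ := deriv W.sigmaQuot z / W.sigmaQuot z

theorem analyticAt_zetaReg {z : ℂ} (hz : W.sigmaQuot z ≠ 0) : AnalyticAt ℂ W.zetaReg z :=
  ((W.differentiable_sigmaQuot.analyticAt z).deriv).fun_div
    (W.differentiable_sigmaQuot.analyticAt z) hz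

theorem sigmaQuot_ne_zero {z : ℂ} (hz : z ∉ W.lattice) : W.sigmaQuot z ≠ 0 :=
  right_ne_zero_of_mul (W.S_eq_mul_sigmaQuot z ▸ W.S_ne z hz)

theorem Z_eq_inv_add_zetaReg {z : ℂ} (hz : z ∉ W.lattice) : W.Z z = z⁻¹ + W.zetaReg z := by
  have hz0 : z ≠ 0 := fun h => hz (h ▸ W.zero_mem_lattice)
  have hu := W.sigmaQuot_ne_zero hz
  have hS : HasDerivAt W.S (1 * W.sigmaQuot z + z * deriv W.sigmaQuot z) z := by
    rw [show W.S = fun z => z * W.sigmaQuot z from funext W.S_eq_mul_sigmaQuot]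
    exact (hasDerivAt_id z).mul (W.differentiable_sigmaQuot z).hasDerivAt
  have h := (W.hasDerivAt_S hz).unique hS
  rw [W.S_eq_mul_sigmaQuot] at h
  rw [zetaReg]
  field_simp
  linear_combination h

theorem P_eq_inv_sq_sub_deriv_zetaReg {z : ℂ} (hz : z ∉ W.lattice) :
    W.P z = (z ^ 2)⁻¹ - deriv W.zetaReg z := by
  have hz0 : z ≠ 0 := fun h => hz (h ▸ W.zero_mem_lattice)
  have hZ : W.Z =ᶠ[𝓝 z] fun z => z⁻¹ + W.zetaReg z :=
    Filter.eventually_of_mem (W.isOpen_compl_lattice.mem_nhds hz) fun _ => W.Z_eq_inv_add_zetaReg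
  have hv := (W.analyticAt_zetaReg (W.sigmaQuot_ne_zero hz)).differentiableAt.hasDerivAt
  have h := ((hasDerivAt_inv hz0).add hv).congr_of_eventuallyEq hZ
  have := (W.hasDerivAt_Z hz).unique h
  linear_combination -this

theorem analyticAt_zetaReg_zero : AnalyticAt ℂ W.zetaReg 0 :=
  W.analyticAt_zetaReg (W.sigmaQuot_zero ▸ one_ne_zero)

/-- `ζ(z) - 1/z` is odd, so it vanishes at `0`. -/
theorem zetaReg_zero : W.zetaReg 0 = 0 := by
  have hodd : ∀ᶠ z in 𝓝[≠] 0, W.zetaReg z + W.zetaReg (-z) = 0 := by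
    filter_upwards [W.eventually_nhdsNE_notMem_lattice 0] with z hz
    have h := W.Z_odd z
    rw [W.Z_eq_inv_add_zetaReg hz, W.Z_eq_inv_add_zetaReg (neg_mem_lattice_iff.not.2 hz),
      inv_neg] at h
    linear_combination h
  have hcont : ContinuousAt (fun z => W.zetaReg z + W.zetaReg (-z)) 0 :=
    W.analyticAt_zetaReg_zero.continuousAt.add
      (W.analyticAt_zetaReg_zero.continuousAt.comp_of_eq continuous_neg.continuousAt neg_zero)
  have h := tendsto_nhds_unique (continuousAt_iff_punctured_nhds.1 hcont)
    (tendsto_const_nhds.congr' (hodd.mono fun _ hz => hz.symm))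
  simp only [neg_zero] at h
  linear_combination h / 2

theorem deriv_zetaReg_zero : deriv W.zetaReg 0 = 0 := by
  refine tendsto_nhds_unique
    (continuousAt_iff_punctured_nhds.1 W.analyticAt_zetaReg_zero.deriv.continuousAt) ?_
  refine (by simpa using W.P_pole.neg : Tendsto (fun z => -(W.P z - 1 / z ^ 2)) _ _).congr' ?_
  filter_upwards [W.eventually_nhdsNE_notMem_lattice 0] with z hz
  rw [W.P_eq_inv_sq_sub_deriv_zetaReg hz]
  ring

variable {k : ℂ}

def poleSet (k : ℂ) : Set ℂ := {z | z ∈ W.lattice ∨ z + k ∈ W.lattice}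

theorem countable_poleSet (k : ℂ) : (W.poleSet k).Countable :=
  W.countable_lattice.union (W.countable_lattice.preimage (add_left_injective k))

theorem isOpen_compl_poleSet (k : ℂ) : IsOpen (W.poleSet k)ᶜ := by
  simp only [poleSet, Set.compl_ofPred, not_or, Set.ofPred_and]
  exact W.isOpen_compl_lattice.inter (W.isOpen_compl_lattice.preimage (continuous_add_const k))

theorem eventually_nhdsNE_notMem_poleSet (k p : ℂ) : ∀ᶠ z in 𝓝[≠] p, z ∉ W.poleSet k := by
  have hshift : ∀ᶠ z in 𝓝 p, z + k ∈ W.lattice → z + k = p + k :=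
    (continuous_add_const k).continuousAt.eventually (W.eventually_mem_lattice_imp_eq (p + k))
  filter_upwards [nhdsWithin_le_nhds (W.eventually_mem_lattice_imp_eq p),
    nhdsWithin_le_nhds hshift, self_mem_nhdsWithin] with z hz hzk hzp
  rintro (h | h)
  exacts [hzp (hz h), hzp (add_right_cancel (hzk h))]

theorem add_mem_poleSet_iff {w z : ℂ} (hw : w ∈ W.lattice) :
    z + w ∈ W.poleSet k ↔ z ∈ W.poleSet k := by
  simp only [poleSet, Set.mem_ofPred_eq, add_right_comm z w k, add_mem_lattice_iff hw]

theorem neg_sub_mem_poleSet_iff {z : ℂ} : -z - k ∈ W.poleSet k ↔ z ∈ W.poleSet k := by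
  simp only [poleSet, Set.mem_ofPred_eq]
  rw [sub_add_cancel, ← neg_add', neg_mem_lattice_iff, neg_mem_lattice_iff, or_comm]

def psiLogDeriv (k z : ℂ) : ℂ := W.Z (z + k) - W.Z z - W.Z k

/-- The addition theorem for `ζ` says that this elliptic function of `z` vanishes. -/
def additionDefect (k z : ℂ) : ℂ := W.psiLogDeriv k z ^ 2 - W.P z - W.P (z + k) - W.P k

theorem additionDefect_add {w z : ℂ} (hw : w ∈ W.lattice) (hz : z ∉ W.poleSet k) :
    W.additionDefect k (z + w) = W.additionDefect k z := by
  simp only [poleSet, Set.mem_ofPred_eq, not_or] at hz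
  have hZ := W.Z_add_sub_Z_eq hw hz.2 hz.1
  simp only [additionDefect, psiLogDeriv, add_right_comm z w k, W.P_periodic w hw]
  rw [show W.Z (z + k + w) - W.Z (z + w) = W.Z (z + k) - W.Z z by linear_combination hZ]

theorem additionDefect_neg_sub {z : ℂ} (hz : z ∉ W.poleSet k) :
    W.additionDefect k (-z - k) = W.additionDefect k z := by
  simp only [poleSet, Set.mem_ofPred_eq, not_or] at hz
  simp only [additionDefect, psiLogDeriv]
  rw [sub_add_cancel, ← neg_add', W.Z_odd, W.Z_odd, W.P_neg hz.1, W.P_neg hz.2]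
  ring

theorem differentiableAt_additionDefect {z : ℂ} (hz : z ∉ W.poleSet k) :
    DifferentiableAt ℂ (W.additionDefect k) z := by
  simp only [poleSet, Set.mem_ofPred_eq, not_or] at hz
  have hZk := differentiableAt_comp_add_const.2 (W.Z_diff _ hz.2)
  have hPk := differentiableAt_comp_add_const.2 (W.P_diff _ hz.2)
  exact ((((hZk.sub (W.Z_diff z hz.1)).sub_const _).pow 2).sub (W.P_diff z hz.1)).sub
    hPk |>.sub_const _

/-- Near `0`, with `a(z) = ζ(z + k) - ζ(k) - (ζ(z) - 1/z)`, the defect equals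
`a² - 2a/z + (ζ(z) - 1/z)' - ℘(z + k) - ℘(k)`, and `a(0) = 0`, `a'(0) = -℘(k)`. -/
theorem tendsto_additionDefect_zero (hk : k ∉ W.lattice) :
    Tendsto (W.additionDefect k) (𝓝[≠] 0) (𝓝 0) := by
  set a : ℂ → ℂ := fun z => W.Z (z + k) - W.Z k - W.zetaReg z
  have ha0 : a 0 = 0 := by simp [a, W.zetaReg_zero]
  have ha : HasDerivAt a (-W.P k) 0 := by
    have h := (((W.hasDerivAt_Z ((zero_add k).symm ▸ hk)).comp_add_const 0 k).sub_const
      (W.Z k)).fun_sub W.analyticAt_zetaReg_zero.differentiableAt.hasDerivAt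
    simpa [W.deriv_zetaReg_zero] using h
  have hPk : ContinuousAt (fun z => W.P (z + k)) 0 :=
    (differentiableAt_comp_add_const.2 ((zero_add k).symm ▸ W.P_diff k hk)).continuousAt
  have hG : Tendsto
      (fun z => a z ^ 2 - 2 * dslope a 0 z + deriv W.zetaReg z - W.P (z + k) - W.P k)
      (𝓝 0) (𝓝 0) := by
    have hca := ha.continuousAt
    have hcd := continuousAt_dslope_same.2 ha.differentiableAt
    have hcv := W.analyticAt_zetaReg_zero.deriv.continuousAt
    have h : ContinuousAt (fun z =>
        a z ^ 2 - 2 * dslope a 0 z + deriv W.zetaReg z - W.P (z + k) - W.P k) 0 := by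
      fun_prop
    convert h.tendsto using 2
    simp only [ha0, dslope_same, ha.deriv, W.deriv_zetaReg_zero, zero_add]
    ring
  refine (hG.mono_left nhdsWithin_le_nhds).congr' ?_
  filter_upwards [W.eventually_nhdsNE_notMem_lattice 0, self_mem_nhdsWithin] with z hz hz0
  rw [dslope_of_ne _ hz0, slope_def_field, ha0]
  simp only [additionDefect, psiLogDeriv, a, W.Z_eq_inv_add_zetaReg hz,
    W.P_eq_inv_sq_sub_deriv_zetaReg hz]
  field_simp
  ring

/-- The singularities of `additionDefect k` turn out to be removable, with value `0`. -/
def additionDefectExt (k : ℂ) : ℂ → ℂ := (W.poleSet k)ᶜ.indicator (W.additionDefect k)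

theorem additionDefectExt_add {w : ℂ} (hw : w ∈ W.lattice) (z : ℂ) :
    W.additionDefectExt k (z + w) = W.additionDefectExt k z := by
  by_cases hz : z ∈ W.poleSet k
  · simp [additionDefectExt, hz, (W.add_mem_poleSet_iff hw).2 hz]
  · simp [additionDefectExt, hz, (W.add_mem_poleSet_iff hw).not.2 hz,
      W.additionDefect_add hw hz]

theorem additionDefectExt_neg_sub (z : ℂ) :
    W.additionDefectExt k (-z - k) = W.additionDefectExt k z := by
  by_cases hz : z ∈ W.poleSet k
  · simp [additionDefectExt, hz, W.neg_sub_mem_poleSet_iff.2 hz]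
  · simp [additionDefectExt, hz, W.neg_sub_mem_poleSet_iff.not.2 hz,
      W.additionDefect_neg_sub hz]

theorem additionDefectExt_zero : W.additionDefectExt k 0 = 0 := by
  have h0 : (0 : ℂ) ∈ W.poleSet k := Or.inl W.zero_mem_lattice
  exact Set.indicator_of_notMem (Set.notMem_compl_iff.2 h0) _

theorem additionDefectExt_eventuallyEq {p : ℂ} (hp : p ∉ W.poleSet k) :
    W.additionDefectExt k =ᶠ[𝓝 p] W.additionDefect k :=
  Filter.eventually_of_mem ((W.isOpen_compl_poleSet k).mem_nhds hp) fun _ hz =>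
    Set.indicator_of_mem hz _

theorem continuousAt_additionDefectExt_zero (hk : k ∉ W.lattice) :
    ContinuousAt (W.additionDefectExt k) 0 := by
  rw [continuousAt_iff_punctured_nhds, additionDefectExt_zero]
  refine (W.tendsto_additionDefect_zero hk).congr' ?_
  filter_upwards [W.eventually_nhdsNE_notMem_poleSet k 0] with z hz
  exact (Set.indicator_of_mem hz _).symm

/-- By periodicity and the symmetry `z ↦ -z - k`, every point of the pole set looks like `0`. -/
theorem continuousAt_additionDefectExt (hk : k ∉ W.lattice) {p : ℂ} (hp : p ∈ W.poleSet k) :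
    ContinuousAt (W.additionDefectExt k) p := by
  have h0 := W.continuousAt_additionDefectExt_zero hk
  rcases hp with hp | hp
  · have h : W.additionDefectExt k = fun z => W.additionDefectExt k (z - p) :=
      funext fun z => by rw [← W.additionDefectExt_add hp (z - p), sub_add_cancel]
    rw [h]
    exact h0.comp_of_eq (continuous_sub_right p).continuousAt (sub_self p)
  · have h : W.additionDefectExt k = fun z => W.additionDefectExt k (p - z) :=
      funext fun z => by
        rw [← W.additionDefectExt_neg_sub z, ← W.additionDefectExt_add hp]
        ring_nf
    rw [h]
    exact h0.comp_of_eq (continuous_sub_left p).continuousAt (sub_self p)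

theorem differentiable_additionDefectExt (hk : k ∉ W.lattice) :
    Differentiable ℂ (W.additionDefectExt k) := by
  have hoff : ∀ p ∉ W.poleSet k, DifferentiableAt ℂ (W.additionDefectExt k) p := fun p hp =>
    (W.differentiableAt_additionDefect hp).congr_of_eventuallyEq
      (W.additionDefectExt_eventuallyEq hp)
  intro p
  by_cases hp : p ∈ W.poleSet k
  · exact (Complex.analyticAt_of_differentiable_on_punctured_nhds_of_continuousAt
      ((W.eventually_nhdsNE_notMem_poleSet k p).mono hoff)
      (W.continuousAt_additionDefectExt hk hp)).differentiableAt
  · exact hoff p hp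

/-- Liouville: the extended defect is entire and doubly periodic, hence constant. -/
theorem additionDefectExt_eq_zero (hk : k ∉ W.lattice) (z : ℂ) : W.additionDefectExt k z = 0 := by
  have hdiff := W.differentiable_additionDefectExt hk
  have hbdd := (IsZLattice.isCompact_range_of_periodic W.periodPair.lattice _ hdiff.continuous
    fun z w hw => W.additionDefectExt_add (W.mem_lattice_iff.2 hw) z).isBounded
  rw [hdiff.apply_eq_apply_of_bounded hbdd z 0, additionDefectExt_zero]

theorem psiLogDeriv_sq (hk : k ∉ W.lattice) {z : ℂ} (hz : z ∉ W.poleSet k) :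
    W.psiLogDeriv k z ^ 2 = W.P z + W.P (z + k) + W.P k := by
  have h := W.additionDefectExt_eq_zero hk z
  rw [additionDefectExt, Set.indicator_of_mem hz, additionDefect] at h
  linear_combination h

theorem hasDerivAt_hermitePsi (hk : k ∉ W.lattice) {z : ℂ} (hz : z ∉ W.poleSet k) :
    HasDerivAt (hermitePsi W k) (W.psiLogDeriv k z * hermitePsi W k z) z := by
  simp only [poleSet, Set.mem_ofPred_eq, not_or] at hz
  have hexp : HasDerivAt (fun z => Complex.exp (-W.Z k * z))
      (Complex.exp (-W.Z k * z) * -W.Z k) z := by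
    simpa using ((hasDerivAt_id z).const_mul (-W.Z k)).cexp
  have h := (((W.hasDerivAt_S hz.2).comp_add_const z k).fun_div
    ((W.hasDerivAt_S hz.1).mul_const (W.S k)) (mul_ne_zero (W.S_ne z hz.1) (W.S_ne k hk))).fun_mul
    hexp
  refine h.congr_deriv ?_
  simp only [hermitePsi, psiLogDeriv]
  field_simp [W.S_ne z hz.1, W.S_ne k hk]
  ring

theorem differentiableOn_hermitePsi (hk : k ∉ W.lattice) :
    DifferentiableOn ℂ (hermitePsi W k) W.latticeᶜ := fun z hz =>
  DifferentiableAt.differentiableWithinAt <|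
    ((differentiableAt_comp_add_const.2 (W.S_diff _)).div ((W.S_diff z).mul_const _)
      (mul_ne_zero (W.S_ne z hz) (W.S_ne k hk))).mul (by fun_prop)

theorem hermitePsi_lame_of_notMem_poleSet (hk : k ∉ W.lattice) {z : ℂ} (hz : z ∉ W.poleSet k) :
    -deriv (deriv (hermitePsi W k)) z + 2 * W.P z * hermitePsi W k z
      = (-W.P k) * hermitePsi W k z := by
  have hderiv : deriv (hermitePsi W k) =ᶠ[𝓝 z] fun x => W.psiLogDeriv k x * hermitePsi W k x :=
    Filter.eventually_of_mem ((W.isOpen_compl_poleSet k).mem_nhds hz) fun x hx =>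
      (W.hasDerivAt_hermitePsi hk hx).deriv
  have hQ : HasDerivAt (W.psiLogDeriv k) (W.P z - W.P (z + k)) z := by
    simp only [poleSet, Set.mem_ofPred_eq, not_or] at hz
    have h := (((W.hasDerivAt_Z hz.2).comp_add_const z k).fun_sub (W.hasDerivAt_Z hz.1)).sub_const
      (W.Z k)
    exact h.congr_deriv (by ring)
  rw [hderiv.deriv_eq, (hQ.fun_mul (W.hasDerivAt_hermitePsi hk hz)).deriv]
  linear_combination (-hermitePsi W k z) * W.psiLogDeriv_sq hk hz

/-- The pole set has dense complement, and both sides are continuous off the lattice. -/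
theorem hermitePsi_lame (hk : k ∉ W.lattice) {z : ℂ} (hz : z ∉ W.lattice) :
    -deriv (deriv (hermitePsi W k)) z + 2 * W.P z * hermitePsi W k z
      = (-W.P k) * hermitePsi W k z := by
  have hψ := (W.differentiableOn_hermitePsi hk).analyticOnNhd W.isOpen_compl_lattice
  have hP : ContinuousOn W.P W.latticeᶜ := fun z hz =>
    (W.P_diff z hz).continuousAt.continuousWithinAt
  have hsub : (W.poleSet k)ᶜ ⊆ W.latticeᶜ := fun _ hz h => hz (Or.inl h)
  have hdense : W.latticeᶜ ⊆ closure (W.poleSet k)ᶜ := by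
    rw [((W.countable_poleSet k).dense_compl ℂ).closure_eq]
    exact Set.subset_univ _
  exact Set.EqOn.of_subset_closure (fun _ hz => W.hermitePsi_lame_of_notMem_poleSet hk hz)
    ((hψ.deriv.deriv.continuousOn.neg).add ((continuousOn_const.mul hP).mul hψ.continuousOn))
    (continuousOn_const.mul hψ.continuousOn) hsub hdense hz

theorem hermitePsi_add_two_mul (hk : k ∉ W.lattice) {ω : ℂ} (hω2 : 2 * ω ∈ W.lattice)
    (hω : ω ∉ W.lattice) {z : ℂ} (hz : z ∉ W.lattice) :
    hermitePsi W k (z + 2 * ω)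
      = Complex.exp (2 * W.Z ω * k - 2 * W.Z k * ω) * hermitePsi W k z := by
  obtain ⟨C, hC0, hC⟩ := W.S_add_eq_mul_exp_mul hω2 fun z hz => W.Z_add_two_mul hω2 hω hz
  have hquot : W.S (z + 2 * ω + k) / (W.S (z + 2 * ω) * W.S k)
      = Complex.exp (2 * W.Z ω * k) * (W.S (z + k) / (W.S z * W.S k)) := by
    rw [add_right_comm, hC, hC, mul_add, Complex.exp_add]
    field_simp [W.S_ne z hz, W.S_ne k hk, Complex.exp_ne_zero]
  have hexp : Complex.exp (-W.Z k * (z + 2 * ω))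
      = Complex.exp (-W.Z k * z) * Complex.exp (-(2 * W.Z k * ω)) := by
    rw [← Complex.exp_add]
    ring_nf
  rw [hermitePsi, hermitePsi, hquot, hexp, sub_eq_add_neg, Complex.exp_add]
  ring

end WeierstrassData

/-- For every `k ∉ 𝓛`, the function
`ψ(z,k) = σ(z+k)/(σ(z)σ(k)) · exp(-ζ(k)z)` solves the `m = 1` Lamé equation
`-ψ'' + 2℘(z)ψ = λψ` with `λ = -℘(k)` away from the lattice, and for every
half-period `ω` it has the Floquet property
`ψ(z+2ω,k) = exp(2ηk - 2ζ(k)ω)ψ(z,k)` with `η = ζ(ω)`. -/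
theorem hermitePsi_solves_lame_and_floquet
    (W : WeierstrassData) (k : ℂ) (hk : k ∉ W.lattice) :
    (∀ z ∉ W.lattice,
      -deriv (deriv (hermitePsi W k)) z + 2 * W.P z * hermitePsi W k z
        = (-W.P k) * hermitePsi W k z) ∧
    (∀ ω : ℂ, 2 * ω ∈ W.lattice → ω ∉ W.lattice → ∀ z ∉ W.lattice,
      hermitePsi W k (z + 2 * ω)
        = Complex.exp (2 * W.Z ω * k - 2 * W.Z k * ω) * hermitePsi W k z) :=
  ⟨fun _ hz => W.hermitePsi_lame hk hz,
    fun _ hω2 hω _ hz => W.hermitePsi_add_two_mul hk hω2 hω hz⟩
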